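/- arXiv:1502.05774 — 2 statements merged into one kernel-verified Lean document; each statement's English description precedes it below -/
import Mathlib

section
/- Fix K > 0 and Δ ∈ (0, K] with Δ²/K² ≤ c_max, and let π be the random price with point mass of probability Δ/(K·√c_max) at c_max and density Δ/(2K·x^{3/2}) on the interval (max{c, Δ²/K²}, c_max), conditioned on exceeding a cost c ≥ 0. Then the expected payment E[π · 1{π ≥ c}] = (Δ/K)·(2√c_max − √(max{c, Δ²/K²})). -/
/-!
Restricted to `[c, ∞)`, `ν` is the atom at `cmax` together with the density on `(M, cmax)`,
`M = max c (Δ²/K²)`, since that interval lies above `c`. The atom contributes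
`Δ/(K√cmax) · cmax = (Δ/K)√cmax`, and `x · Δ/(2K x^{3/2}) = (Δ/2K) x^{-1/2}` integrates over
`(M, cmax)` to `(Δ/K)(√cmax - √M)`.
-/

open MeasureTheory Set Real

/-- Also true for `x < 0`: there `x ^ (-1/2)` carries the factor `cos (-π/2) = 0`. -/
theorem Real.rpow_neg_one_half_eq_inv_sqrt (x : ℝ) : x ^ (-(1 / 2) : ℝ) = (√x)⁻¹ := by
  rcases le_or_gt 0 x with hx | hx
  · rw [rpow_neg hx, sqrt_eq_rpow]
  · rw [rpow_def_of_neg hx, sqrt_eq_zero'.2 hx.le, inv_zero, neg_mul, cos_neg,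
      one_div_mul_eq_div, cos_pi_div_two, mul_zero]

theorem intervalIntegrable_inv_sqrt (a b : ℝ) :
    IntervalIntegrable (fun x => (√x)⁻¹) volume a b := by
  simpa only [rpow_neg_one_half_eq_inv_sqrt] using
    intervalIntegral.intervalIntegrable_rpow' (a := a) (b := b) (r := -(1 / 2)) (by norm_num)

theorem integral_inv_sqrt (a b : ℝ) : ∫ x in a..b, (√x)⁻¹ = 2 * (√b - √a) := by
  simp_rw [← rpow_neg_one_half_eq_inv_sqrt]
  rw [integral_rpow (Or.inl (by norm_num)), sqrt_eq_rpow, sqrt_eq_rpow]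
  norm_num
  ring

theorem integral_withDensity_ofReal {α E : Type*} [MeasurableSpace α] [NormedAddCommGroup E]
    [NormedSpace ℝ E] {μ : Measure α} {f : α → ℝ} (hf : Measurable f) (hf0 : ∀ᵐ x ∂μ, 0 ≤ f x)
    (g : α → E) :
    ∫ x, g x ∂μ.withDensity (fun x => ENNReal.ofReal (f x)) = ∫ x, f x • g x ∂μ := by
  rw [integral_withDensity_eq_integral_toReal_smul hf.ennreal_ofReal
    (ae_of_all _ fun _ => ENNReal.ofReal_lt_top)]
  refine integral_congr_ae (hf0.mono fun x hx => ?_)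
  simp only [ENNReal.toReal_ofReal hx]

theorem integrable_withDensity_ofReal_iff {α E : Type*} [MeasurableSpace α] [NormedAddCommGroup E]
    [NormedSpace ℝ E] {μ : Measure α} {f : α → ℝ} (hf : Measurable f) (hf0 : ∀ᵐ x ∂μ, 0 ≤ f x)
    {g : α → E} :
    Integrable g (μ.withDensity (fun x => ENNReal.ofReal (f x))) ↔
      Integrable (fun x => f x • g x) μ := by
  rw [integrable_withDensity_iff_integrable_smul' hf.ennreal_ofReal
    (ae_of_all _ fun _ => ENNReal.ofReal_lt_top)]
  refine integrable_congr (hf0.mono fun x hx => ?_)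
  simp only [ENNReal.toReal_ofReal hx]

theorem div_rpow_three_halves_mul_self {x : ℝ} (hx : 0 < x) (κ : ℝ) :
    κ / x ^ (3 / 2 : ℝ) * x = κ * (√x)⁻¹ := by
  have hx32 : x ^ (3 / 2 : ℝ) = x * √x := by
    rw [sqrt_eq_rpow, ← rpow_one_add' hx.le (by norm_num)]
    norm_num
  have : 0 < √x := sqrt_pos.2 hx
  rw [hx32]
  field_simp

section ThreeHalves

variable {a b κ : ℝ}

theorem div_rpow_three_halves_smul_self_ae_eq (ha : 0 ≤ a) :
    (fun x => (κ / x ^ (3 / 2 : ℝ)) • x) =ᵐ[volume.restrict (Ioo a b)] fun x => κ * (√x)⁻¹ :=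
  (ae_restrict_iff' measurableSet_Ioo).2 <| ae_of_all _ fun _ hx =>
    div_rpow_three_halves_mul_self (ha.trans_lt hx.1) κ

theorem div_rpow_three_halves_ae_nonneg (ha : 0 ≤ a) (hκ : 0 ≤ κ) :
    ∀ᵐ x ∂volume.restrict (Ioo a b), 0 ≤ κ / x ^ (3 / 2 : ℝ) :=
  (ae_restrict_iff' measurableSet_Ioo).2 <| ae_of_all _ fun _ hx =>
    div_nonneg hκ (rpow_nonneg (ha.trans hx.1.le) _)

theorem integrable_id_withDensity_div_rpow_three_halves (ha : 0 ≤ a) (hκ : 0 ≤ κ) :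
    Integrable (fun x => x) ((volume.restrict (Ioo a b)).withDensity
      fun x => ENNReal.ofReal (κ / x ^ (3 / 2 : ℝ))) := by
  rw [integrable_withDensity_ofReal_iff (by fun_prop)
    (div_rpow_three_halves_ae_nonneg ha hκ),
    integrable_congr (div_rpow_three_halves_smul_self_ae_eq ha)]
  exact ((intervalIntegrable_inv_sqrt a b).const_mul κ).def'.mono_set
    (Ioo_subset_Ioc_self.trans Ioc_subset_uIoc)

theorem integral_id_withDensity_div_rpow_three_halves (ha : 0 ≤ a) (hab : a ≤ b) (hκ : 0 ≤ κ) :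
    ∫ x, x ∂(volume.restrict (Ioo a b)).withDensity
      (fun x => ENNReal.ofReal (κ / x ^ (3 / 2 : ℝ))) = 2 * κ * (√b - √a) := by
  rw [integral_withDensity_ofReal (by fun_prop)
    (div_rpow_three_halves_ae_nonneg ha hκ),
    integral_congr_ae (div_rpow_three_halves_smul_self_ae_eq ha),
    integral_Ioc_eq_integral_Ioo.symm, ← intervalIntegral.integral_of_le hab,
    intervalIntegral.integral_const_mul, integral_inv_sqrt]
  ring

end ThreeHalves

theorem expected_payment_general
    (K Δ cmax c : ℝ) (hK : 0 < K) (hΔ : 0 < Δ)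
    (hcmax : Δ ^ 2 / K ^ 2 ≤ cmax) (hccmax : c ≤ cmax)
    (ν : Measure ℝ)
    (hν : ν = (ENNReal.ofReal (Δ / (K * Real.sqrt cmax))) • Measure.dirac cmax +
      (volume : Measure ℝ).withDensity
        (Set.indicator (Set.Ioo (max c (Δ ^ 2 / K ^ 2)) cmax)
          (fun x => ENNReal.ofReal (Δ / (2 * K * x ^ ((3:ℝ)/2)))))) :
    ∫ x in Set.Ici c, x ∂ν =
      (Δ / K) * (2 * Real.sqrt cmax - Real.sqrt (max c (Δ ^ 2 / K ^ 2))) := by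
  set M := max c (Δ ^ 2 / K ^ 2)
  have hM : 0 ≤ M := le_max_of_le_right (by positivity)
  have hMc : M ≤ cmax := max_le hccmax hcmax
  have hρ : (fun x : ℝ => ENNReal.ofReal (Δ / (2 * K * x ^ ((3:ℝ)/2)))) =
      fun x => ENNReal.ofReal (Δ / (2 * K) / x ^ (3 / 2 : ℝ)) :=
    funext fun x => by rw [div_mul_eq_div_div]
  have hrestrict : ν.restrict (Ici c) =
      ENNReal.ofReal (Δ / (K * √cmax)) • Measure.dirac cmax +
        (volume.restrict (Ioo M cmax)).withDensity
          fun x => ENNReal.ofReal (Δ / (2 * K) / x ^ (3 / 2 : ℝ)) := by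
    rw [hν, hρ, Measure.restrict_add, Measure.restrict_smul, restrict_dirac' measurableSet_Ici,
      if_pos (mem_Ici.2 hccmax), withDensity_indicator measurableSet_Ioo,
      restrict_withDensity measurableSet_Ici, Measure.restrict_restrict measurableSet_Ici,
      inter_eq_right.2 (Ioo_subset_Ioi_self.trans (Ioi_subset_Ici (le_max_left _ _)))]
  have hκ : 0 ≤ Δ / (2 * K) := by positivity
  rw [hrestrict, integral_add_measure
      ((integrable_dirac (by simp)).smul_measure ENNReal.ofReal_ne_top)
      (integrable_id_withDensity_div_rpow_three_halves hM hκ),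
    integral_smul_measure, integral_dirac, ENNReal.toReal_ofReal (by positivity),
    integral_id_withDensity_div_rpow_three_halves hM hMc hκ, smul_eq_mul]
  linear_combination (Δ / K) * div_sqrt (x := cmax)

theorem expected_payment
    (K Δ cmax c : ℝ) (hK : 0 < K) (hΔ : 0 < Δ) (hΔK : Δ ≤ K)
    (hcmax : Δ ^ 2 / K ^ 2 ≤ cmax) (hc : 0 ≤ c) (hccmax : c ≤ cmax)
    (ν : Measure ℝ)
    (hν : ν = (ENNReal.ofReal (Δ / (K * Real.sqrt cmax))) • Measure.dirac cmax +
      (volume : Measure ℝ).withDensity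
        (Set.indicator (Set.Ioo (max c (Δ ^ 2 / K ^ 2)) cmax)
          (fun x => ENNReal.ofReal (Δ / (2 * K * x ^ ((3:ℝ)/2)))))) :
    ∫ x in Set.Ici c, x ∂ν =
      (Δ / K) * (2 * Real.sqrt cmax - Real.sqrt (max c (Δ ^ 2 / K ^ 2))) :=
  expected_payment_general K Δ cmax c hK hΔ hcmax hccmax ν hν
end

section
/- Let H be a real inner product space, C ⊆ H convex, and for each t ∈ {1,...,T} let Φ_t : H → ℝ be (1/η)-strongly convex with Φ_t(h) = Φ_{t-1}(h) + f_t(h), where f_t is convex. Let h_t minimize Φ_{t-1} and h_{t+1} minimize Φ_t over C. Then ‖h_t − h_{t+1}‖² ≤ 2η·(f_t(h_t) − f_t(h_{t+1})). -/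
/-!
Quadratic growth at a minimizer of the `(1/η)`-strongly convex `Φcur` gives
`Φcur ht1 + ‖ht - ht1‖² / (2η) ≤ Φcur ht`, while `ht` minimizing `Φprev` gives
`Φprev ht ≤ Φprev ht1`; subtracting leaves `‖ht - ht1‖² / (2η) ≤ f ht - f ht1`.
-/

open Filter Topology

section GrowthAtMinimizer

variable {E : Type*} [NormedAddCommGroup E] [NormedSpace ℝ E] {s : Set E} {g : E → ℝ} {x y : E}

/-- Comparing `g x` with `g ((1 - b) • y + b • x)` gives `g x + b * φ ‖y - x‖ ≤ g y` for
`b ∈ (0, 1)`; let `b → 1`. -/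
lemma UniformConvexOn.add_le_of_isMinOn {φ : ℝ → ℝ} (hg : UniformConvexOn s φ g)
    (hx : x ∈ s) (hy : y ∈ s) (hmin : IsMinOn g s x) : g x + φ ‖y - x‖ ≤ g y := by
  have hgrowth : ∀ b ∈ Set.Ioo (0 : ℝ) 1, g x + b * φ ‖y - x‖ ≤ g y := by
    rintro b ⟨hb0, hb1⟩
    have hab : (1 - b) + b = 1 := sub_add_cancel 1 b
    have hmid : g x ≤ (1 - b) * g y + b * g x - (1 - b) * b * φ ‖y - x‖ :=
      (hmin (hg.1 hy hx (by linarith) hb0.le hab)).trans (hg.2 hy hx (by linarith) hb0.le hab)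
    nlinarith
  have hlim : Tendsto (fun b : ℝ ↦ g x + b * φ ‖y - x‖) (𝓝[<] 1) (𝓝 (g x + 1 * φ ‖y - x‖)) :=
    ((continuous_const.add (continuous_id.mul continuous_const)).tendsto 1).mono_left
      nhdsWithin_le_nhds
  simpa using le_of_tendsto hlim (eventually_of_mem (Ioo_mem_nhdsLT zero_lt_one) hgrowth)

lemma StrongConvexOn.add_le_of_isMinOn {m : ℝ} (hg : StrongConvexOn s m g)
    (hx : x ∈ s) (hy : y ∈ s) (hmin : IsMinOn g s x) : g x + m / 2 * ‖y - x‖ ^ 2 ≤ g y :=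
  UniformConvexOn.add_le_of_isMinOn hg hx hy hmin

end GrowthAtMinimizer

theorem ftrl_stability_general
    {H : Type*} [NormedAddCommGroup H] [InnerProductSpace ℝ H]
    (C : Set H) (η : ℝ) (hη : 0 < η)
    (Φprev Φcur f : H → ℝ)
    (hsum : ∀ h, Φcur h = Φprev h + f h)
    (hΦcur : StrongConvexOn C (1 / η) Φcur)
    (ht ht1 : H) (hmemt : ht ∈ C) (hmemt1 : ht1 ∈ C)
    (hmint : IsMinOn Φprev C ht) (hmint1 : IsMinOn Φcur C ht1) :
    ‖ht - ht1‖ ^ 2 ≤ 2 * η * (f ht - f ht1) := by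
  have hgrowth := hΦcur.add_le_of_isMinOn hmemt1 hmemt hmint1
  have hprev : Φprev ht ≤ Φprev ht1 := hmint hmemt1
  have hkey : 1 / η / 2 * ‖ht - ht1‖ ^ 2 ≤ f ht - f ht1 := by
    linarith [hsum ht, hsum ht1]
  calc ‖ht - ht1‖ ^ 2 = 2 * η * (1 / η / 2 * ‖ht - ht1‖ ^ 2) := by field_simp
    _ ≤ 2 * η * (f ht - f ht1) := by gcongr

theorem ftrl_stability
    {H : Type*} [NormedAddCommGroup H] [InnerProductSpace ℝ H]
    (C : Set H) (hC : Convex ℝ C) (η : ℝ) (hη : 0 < η)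
    (Φprev Φcur f : H → ℝ)
    (hf : ConvexOn ℝ C f)
    (hsum : ∀ h, Φcur h = Φprev h + f h)
    (hΦprev : StrongConvexOn C (1 / η) Φprev)
    (hΦcur : StrongConvexOn C (1 / η) Φcur)
    (ht ht1 : H) (hmemt : ht ∈ C) (hmemt1 : ht1 ∈ C)
    (hmint : IsMinOn Φprev C ht) (hmint1 : IsMinOn Φcur C ht1) :
    ‖ht - ht1‖ ^ 2 ≤ 2 * η * (f ht - f ht1) :=
  ftrl_stability_general C η hη Φprev Φcur f hsum hΦcur ht ht1 hmemt hmemt1 hmint hmint1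
end
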